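/- Let {A_α} be a finite family of operators on a finite-dimensional Hilbert space with Σ_α A_α†A_α ⪯ I, and let ℱ(X) = Σ_α A_α X A_α†. If ℱ has an eigenvalue of modulus 1, then there exists a nonzero positive semi-definite σ with ℱ(σ) = σ. -/

import Mathlib

/-!
Write the eigenvector as `X = P₁ - P₂ + i (P₃ - P₄)` with `Pⱼ ⪰ 0` and put `Q = ∑ Pⱼ`. As `ℱ` is
positive and `‖P‖ ≤ tr P` for `P ⪰ 0` (operator norm), `‖X‖ = ‖ℱⁿ X‖ ≤ tr ℱⁿ Q ≤ tr Q` for all `n`.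
So the orbit of `Q` is bounded and lies in the closed convex set `{Z ⪰ 0 | tr Z ≥ ‖X‖}`, and a limit
point of its Cesàro means is a fixed point of `ℱ` in that set, in particular a nonzero one.
-/

open Matrix
open scoped ComplexOrder

section FixedPoint

open Filter Topology Bornology

variable {E : Type*} [NormedAddCommGroup E] [NormedSpace ℝ E]

lemma Convex.birkhoffAverage_mem {α : Type*} {S : Set E} (hS : Convex ℝ S) {f : α → α}
    {g : α → E} {x : α} (hx : ∀ k, g (f^[k] x) ∈ S) {N : ℕ} (hN : 0 < N) :
    birkhoffAverage ℝ f g N x ∈ S := by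
  rw [birkhoffAverage, birkhoffSum, Finset.smul_sum]
  refine hS.sum_mem (fun _ _ => by positivity) ?_ fun k _ => hx k
  simp [hN.ne']

lemma map_birkhoffAverage_id (f : E →ₗ[ℝ] E) (N : ℕ) (x : E) :
    f (birkhoffAverage ℝ f (id : E → E) N x) = birkhoffAverage ℝ f id N (f x) := by
  simp [birkhoffAverage, birkhoffSum, map_sum, ← Function.iterate_succ_apply' f,
    Function.iterate_succ_apply]

theorem Convex.exists_fixedPoint_of_isBounded_orbit [FiniteDimensional ℝ E] (f : E →ₗ[ℝ] E)
    {S : Set E} (hSv : Convex ℝ S) (hSc : IsClosed S) {x : E} (hxS : ∀ k, f^[k] x ∈ S)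
    (hbdd : IsBounded (Set.range fun k => f^[k] x)) : ∃ y ∈ S, f y = y := by
  have : ProperSpace E := FiniteDimensional.proper ℝ E
  set a : ℕ → E := fun N => birkhoffAverage ℝ f id (N + 1) x
  have ha_hull (N : ℕ) : a N ∈ convexHull ℝ (Set.range fun k => f^[k] x) :=
    (convex_convexHull ℝ _).birkhoffAverage_mem (g := id)
      (fun k => subset_convexHull ℝ _ (Set.mem_range_self k)) N.succ_pos
  obtain ⟨y, -, φ, hφ, hy⟩ := tendsto_subseq_of_bounded (isBounded_convexHull.2 hbdd) ha_hull
  have hdrift : Tendsto (fun j => f (a (φ j)) - a (φ j)) atTop (𝓝 0) := by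
    simp only [a, map_birkhoffAverage_id]
    exact ((tendsto_birkhoffAverage_apply_sub_birkhoffAverage ℝ (g := id) hbdd).comp
      (tendsto_add_atTop_nat 1)).comp hφ.tendsto_atTop
  have hfy : Tendsto (fun j => f (a (φ j))) atTop (𝓝 (f y)) :=
    (f.continuous_of_finiteDimensional.tendsto y).comp hy
  refine ⟨y, hSc.mem_of_tendsto hy (Eventually.of_forall fun j =>
    hSv.birkhoffAverage_mem (g := id) hxS (φ j).succ_pos), ?_⟩
  exact sub_eq_zero.1 (tendsto_nhds_unique (hfy.sub hy) hdrift)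

end FixedPoint

namespace Matrix

open scoped MatrixOrder Matrix.Norms.L2Operator ComplexStarModule

section PosSemidef

variable {n : Type*} [Fintype n] [DecidableEq n]

lemma PosSemidef.norm_le_re_trace {P : Matrix n n ℂ} (hP : P.PosSemidef) : ‖P‖ ≤ P.trace.re := by
  cases isEmpty_or_nonempty n
  · simp [Subsingleton.elim P 0]
  obtain ⟨i, hi⟩ : ‖P‖ ∈ Set.range hP.isHermitian.eigenvalues := by
    rw [← hP.isHermitian.spectrum_real_eq_range_eigenvalues]
    exact CStarAlgebra.norm_mem_spectrum_of_nonneg hP.nonneg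
  rw [← hi, hP.isHermitian.trace_eq_sum_eigenvalues, Complex.re_sum]
  simpa using Finset.single_le_sum (fun j _ => hP.eigenvalues_nonneg j) (Finset.mem_univ i)

lemma exists_posSemidef_eq_sub_add_I_smul_sub (X : Matrix n n ℂ) :
    ∃ P₁ P₂ P₃ P₄ : Matrix n n ℂ, P₁.PosSemidef ∧ P₂.PosSemidef ∧ P₃.PosSemidef ∧
      P₄.PosSemidef ∧ X = P₁ - P₂ + Complex.I • (P₃ - P₄) := by
  refine ⟨(ℜ X : Matrix n n ℂ)⁺, (ℜ X : Matrix n n ℂ)⁻, (ℑ X : Matrix n n ℂ)⁺,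
    (ℑ X : Matrix n n ℂ)⁻, (CFC.posPart_nonneg _).posSemidef,
    (CFC.negPart_nonneg _).posSemidef, (CFC.posPart_nonneg _).posSemidef,
    (CFC.negPart_nonneg _).posSemidef, ?_⟩
  rw [CFC.posPart_sub_negPart _ (ℜ X).2, CFC.posPart_sub_negPart _ (ℑ X).2,
    realPart_add_I_smul_imaginaryPart]

lemma exists_posSemidef_norm_map_le_re_trace (X : Matrix n n ℂ) :
    ∃ Q : Matrix n n ℂ, Q.PosSemidef ∧ ∀ Φ : Matrix n n ℂ →ₗ[ℂ] Matrix n n ℂ,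
      (∀ P, P.PosSemidef → (Φ P).PosSemidef) → ‖Φ X‖ ≤ (Φ Q).trace.re := by
  obtain ⟨P₁, P₂, P₃, P₄, h₁, h₂, h₃, h₄, rfl⟩ := exists_posSemidef_eq_sub_add_I_smul_sub X
  refine ⟨P₁ + P₂ + (P₃ + P₄), (h₁.add h₂).add (h₃.add h₄), fun Φ hΦ => ?_⟩
  calc ‖Φ (P₁ - P₂ + Complex.I • (P₃ - P₄))‖
      ≤ ‖Φ P₁‖ + ‖Φ P₂‖ + (‖Φ P₃‖ + ‖Φ P₄‖) := by
        rw [map_add, map_sub, map_smul, map_sub]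
        refine (norm_add_le _ _).trans (add_le_add (norm_sub_le _ _) ?_)
        rw [norm_smul, Complex.norm_I, one_mul]
        exact norm_sub_le _ _
    _ ≤ (Φ P₁).trace.re + (Φ P₂).trace.re + ((Φ P₃).trace.re + (Φ P₄).trace.re) := by
        gcongr <;> exact PosSemidef.norm_le_re_trace (hΦ _ ‹_›)
    _ = (Φ (P₁ + P₂ + (P₃ + P₄))).trace.re := by
        simp only [map_add, trace_add, Complex.add_re]

end PosSemidef

section Kraus

variable {n ι : Type*} [Fintype n] [Fintype ι] (A : ι → Matrix n n ℂ)

def krausMap : Matrix n n ℂ →ₗ[ℂ] Matrix n n ℂ where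
  toFun Z := ∑ α, A α * Z * (A α)ᴴ
  map_add' Z W := by simp only [mul_add, add_mul, Finset.sum_add_distrib]
  map_smul' c Z := by
    simp only [Matrix.mul_smul, Matrix.smul_mul, Finset.smul_sum, RingHom.id_apply]

lemma krausMap_apply (Z : Matrix n n ℂ) : krausMap A Z = ∑ α, A α * Z * (A α)ᴴ := rfl

lemma PosSemidef.krausMap_pow {Z : Matrix n n ℂ} (hZ : Z.PosSemidef) (N : ℕ) :
    ((krausMap A ^ N) Z).PosSemidef := by
  induction N with
  | zero => exact hZ
  | succ N ih =>
    rw [pow_succ', Module.End.mul_apply]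
    exact posSemidef_sum _ fun α _ => ih.mul_mul_conjTranspose_same (A α)

variable [DecidableEq n]

lemma trace_krausMap_le (hA : (1 - ∑ α, (A α)ᴴ * A α).PosSemidef) {Z : Matrix n n ℂ}
    (hZ : Z.PosSemidef) : (krausMap A Z).trace ≤ Z.trace := by
  set s := CFC.sqrt Z
  have hs : IsSelfAdjoint s := (CFC.sqrt_nonneg Z).isSelfAdjoint
  have hZs : s * s = Z := CFC.sqrt_mul_sqrt_self Z hZ.nonneg
  have hcycle : (krausMap A Z).trace = (s * (∑ α, (A α)ᴴ * A α) * s).trace := by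
    simp only [krausMap_apply, trace_sum, Finset.mul_sum, Finset.sum_mul, ← hZs]
    refine Finset.sum_congr rfl fun α _ => ?_
    rw [trace_mul_comm, ← Matrix.mul_assoc, ← Matrix.mul_assoc, trace_mul_comm,
      Matrix.mul_assoc s]
  calc (krausMap A Z).trace = (s * (∑ α, (A α)ᴴ * A α) * s).trace := hcycle
    _ ≤ (s * 1 * s).trace :=
      OrderHomClass.mono (tracePositiveLinearMap n ℂ ℂ) (hs.conjugate_le_conjugate (le_iff.2 hA))
    _ = Z.trace := by rw [Matrix.mul_one, hZs]

lemma trace_krausMap_pow_le (hA : (1 - ∑ α, (A α)ᴴ * A α).PosSemidef) {Z : Matrix n n ℂ}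
    (hZ : Z.PosSemidef) (N : ℕ) : ((krausMap A ^ N) Z).trace ≤ Z.trace := by
  induction N with
  | zero => rfl
  | succ N ih =>
    rw [pow_succ', Module.End.mul_apply]
    exact (trace_krausMap_le A hA (hZ.krausMap_pow A N)).trans ih

theorem exists_posSemidef_ne_zero_krausMap_eq_self (hA : (1 - ∑ α, (A α)ᴴ * A α).PosSemidef)
    {lam : ℂ} {X : Matrix n n ℂ} (hX : X ≠ 0) (heig : krausMap A X = lam • X)
    (hlam : ‖lam‖ = 1) : ∃ σ : Matrix n n ℂ, σ.PosSemidef ∧ σ ≠ 0 ∧ krausMap A σ = σ := by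
  obtain ⟨Q, hQ, hXQ⟩ := exists_posSemidef_norm_map_le_re_trace X
  have hpow (N : ℕ) : (krausMap A ^ N) X = lam ^ N • X := by
    induction N with
    | zero => simp
    | succ N ih => rw [pow_succ', Module.End.mul_apply, ih, map_smul, heig, smul_smul, pow_succ]
  have hlow (N : ℕ) : ‖X‖ ≤ ((krausMap A ^ N) Q).trace.re := by
    simpa [hpow, norm_smul, hlam] using hXQ _ fun P hP => hP.krausMap_pow A N
  have horbit (N : ℕ) : ((krausMap A).restrictScalars ℝ)^[N] Q = (krausMap A ^ N) Q := by
    rw [Module.End.pow_apply, LinearMap.coe_restrictScalars]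
  set S : Set (Matrix n n ℂ) := {Z | 0 ≤ Z} ∩ {Z | ‖X‖ ≤ Z.trace.re}
  have hSv : Convex ℝ S :=
    (convex_Ici 0).inter (convex_halfSpace_ge ⟨fun Z W => by simp, fun c Z => by simp⟩ _)
  have hSc : IsClosed S :=
    CStarAlgebra.isClosed_nonneg.inter (isClosed_le continuous_const (by fun_prop))
  have hbdd : Bornology.IsBounded
      (Set.range fun N => ((krausMap A).restrictScalars ℝ)^[N] Q) := by
    refine isBounded_iff_forall_norm_le.2 ⟨Q.trace.re, ?_⟩
    rintro _ ⟨N, rfl⟩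
    dsimp only
    rw [horbit]
    exact (hQ.krausMap_pow A N).norm_le_re_trace.trans
      (Complex.le_def.1 (trace_krausMap_pow_le A hA hQ N)).1
  obtain ⟨σ, ⟨hσ, hσX⟩, hfix⟩ := Convex.exists_fixedPoint_of_isBounded_orbit _ hSv hSc
    (fun N => by rw [horbit]; exact ⟨(hQ.krausMap_pow A N).nonneg, hlow N⟩) hbdd
  refine ⟨σ, hσ.posSemidef, ?_, hfix⟩
  rintro rfl
  exact hX (norm_le_zero_iff.1 (by simpa using hσX))

end Kraus

end Matrix

/-- If `ℱ(X) = Σ A_α X A_αᴴ` is a subnormalized CP map (`Σ A_αᴴA_α ⪯ I`) with an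
eigenvalue of modulus `1`, then there is a nonzero PSD fixed point `σ` of `ℱ`. -/
theorem stmt11 {m k : ℕ}
    (A : Fin k → Matrix (Fin m) (Fin m) ℂ)
    (hsub : ((1 : Matrix (Fin m) (Fin m) ℂ) - ∑ α, (A α)ᴴ * A α).PosSemidef)
    (lam : ℂ) (X : Matrix (Fin m) (Fin m) ℂ) (hX : X ≠ 0)
    (heig : (∑ α, A α * X * (A α)ᴴ) = lam • X) (hlam : ‖lam‖ = 1) :
    ∃ σ : Matrix (Fin m) (Fin m) ℂ, σ.PosSemidef ∧ σ ≠ 0 ∧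
      (∑ α, A α * σ * (A α)ᴴ) = σ :=
  exists_posSemidef_ne_zero_krausMap_eq_self A hsub hX heig hlam
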